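/- In an extensional BI(_)•-algebra, the object 1 of the internal PRO is reflexive with application B: for every element a of arity (m+1) → 1 there exists a unique element c of arity m → 1 such that c ∘ B = a, namely c = (a I)• ∘ Bᵐ. -/
import Mathlib


namespace Paper

/-- An applicative structure with distinguished elements `B`, `I` and
a unary operation `bul` (written `a•` in the paper). -/
structure BIStruct (α : Type*) where
  ap : α → α → α
  B : α
  I : α
  bul : α → α

namespace BIStruct

variable {α : Type*}

/-- `a ∘ b := B a b`. -/
def comp (S : BIStruct α) (a b : α) : α := S.ap (S.ap S.B a) b

/-- Powers: `a⁰ = I`, `a^(n+1) = a ∘ aⁿ`. -/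
def pow (S : BIStruct α) (a : α) : ℕ → α
  | 0 => S.I
  | n + 1 => S.comp a (S.pow a n)

/-- `a` has arity `m → n` iff `a• ∘ B^(m+1) = (B a) ∘ Bⁿ`. -/
def hasArity (S : BIStruct α) (a : α) (m n : ℕ) : Prop :=
  S.comp (S.bul a) (S.pow S.B (m + 1)) = S.comp (S.ap S.B a) (S.pow S.B n)

/-- The axioms of an extensional BI(_)•-algebra. -/
structure IsExt (S : BIStruct α) : Prop where
  hB : ∀ a b c, S.ap (S.ap (S.ap S.B a) b) c = S.ap a (S.ap b c)
  hI : ∀ a, S.ap S.I a = a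
  hBul : ∀ a b, S.ap (S.bul a) b = S.ap b a
  hLam : S.ap S.B S.I = S.I
  hBulApp : ∀ a b, S.bul (S.ap a b) = S.comp (S.bul b) (S.comp (S.bul a) S.B)
  hArityB : S.comp (S.bul S.B) (S.comp S.B (S.comp S.B S.B)) = S.comp (S.ap S.B S.B) S.B
  hArityI : S.comp (S.bul S.I) S.B = S.ap S.B S.I
  hArityBul : ∀ a, S.comp (S.bul (S.bul a)) S.B = S.comp (S.ap S.B (S.bul a)) S.B

end BIStruct

end Paper

namespace Paper
namespace BIStruct

variable {α : Type*} {S : BIStruct α}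

theorem eap_comp (hS : S.IsExt) (x y z : α) :
    S.ap (S.comp x y) z = S.ap x (S.ap y z) := hS.hB x y z

theorem eEB (hS : S.IsExt) (x y : α) :
    S.comp (S.ap S.B x) (S.ap S.B y) = S.ap S.B (S.comp x y) := by
  have h := congrArg (fun t => S.ap (S.ap t x) y) hS.hArityB
  simp only [comp, hS.hB, hS.hBul] at h ⊢
  exact h

theorem eassoc (hS : S.IsExt) (x y z : α) :
    S.comp (S.comp x y) z = S.comp x (S.comp y z) := by
  have h1 : S.comp (S.comp x y) z = S.ap (S.ap S.B (S.comp x y)) z := rfl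
  rw [h1, ← eEB hS, eap_comp hS]
  rfl

theorem eunit_left (hS : S.IsExt) (x : α) : S.comp S.I x = x := by
  show S.ap (S.ap S.B S.I) x = x
  rw [hS.hLam, hS.hI]

theorem eunit_right (hS : S.IsExt) (x : α) : S.comp x S.I = x := by
  have h := congrArg (fun t => S.ap t x) hS.hArityI
  simp only [comp, hS.hB, hS.hBul, hS.hLam, hS.hI] at h ⊢
  exact h

theorem eR4 (hS : S.IsExt) (x y : α) :
    S.comp (S.bul x) (S.ap S.B y) = S.comp y (S.bul x) := by
  have h := congrArg (fun t => S.ap t y) (hS.hArityBul x)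
  simp only [comp, hS.hB, hS.hBul] at h ⊢
  exact h.symm

theorem eR11 (hS : S.IsExt) (x : α) :
    S.comp S.B (S.ap S.B x) = S.comp (S.ap S.B (S.ap S.B x)) S.B := by
  have h := congrArg (fun t => S.ap t x) hS.hArityB
  simp only [comp, hS.hB, hS.hBul] at h ⊢
  exact h.symm

theorem echain (hS : S.IsExt) {x y u v : α} (h : S.comp x y = S.comp u v) (r : α) :
    S.comp x (S.comp y r) = S.comp u (S.comp v r) := by
  rw [← eassoc hS, h, eassoc hS]

theorem epow1 (hS : S.IsExt) : S.pow S.B 1 = S.B := by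
  show S.comp S.B S.I = S.B
  exact eunit_right hS S.B

theorem epow2 (hS : S.IsExt) : S.pow S.B 2 = S.comp S.B S.B := by
  show S.comp S.B (S.pow S.B 1) = S.comp S.B S.B
  rw [epow1 hS]

theorem epow3 (hS : S.IsExt) : S.pow S.B 3 = S.comp S.B (S.comp S.B S.B) := by
  show S.comp S.B (S.pow S.B 2) = _
  rw [epow2 hS]

theorem epow_add (hS : S.IsExt) (p q : ℕ) :
    S.pow S.B (p + q) = S.comp (S.pow S.B p) (S.pow S.B q) := by
  induction p with
  | zero => rw [Nat.zero_add]; exact (eunit_left hS _).symm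
  | succ p ih =>
      rw [Nat.add_right_comm]
      show S.comp S.B (S.pow S.B (p + q)) = S.comp (S.comp S.B (S.pow S.B p)) (S.pow S.B q)
      rw [ih, ← eassoc hS]

theorem epow_succ (hS : S.IsExt) (k : ℕ) :
    S.pow S.B (k + 1) = S.comp (S.pow S.B k) S.B := by
  rw [epow_add hS, epow1 hS]

theorem epowB_chain (hS : S.IsExt) (k : ℕ) (r : α) :
    S.comp (S.pow S.B k) (S.comp S.B r) = S.comp (S.pow S.B (k + 1)) r := by
  rw [← eassoc hS, ← epow_succ hS]

theorem ebulI (hS : S.IsExt) : S.comp (S.bul S.I) S.B = S.I := by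
  rw [hS.hArityI, hS.hLam]

theorem ebulB_pow (hS : S.IsExt) (k : ℕ) :
    S.comp (S.bul S.B) (S.pow S.B (k + 3)) = S.comp (S.ap S.B S.B) (S.pow S.B (k + 1)) := by
  have h1 : S.pow S.B (k + 3) = S.comp (S.pow S.B 3) (S.pow S.B k) := by
    rw [show k + 3 = 3 + k by omega, epow_add hS]
  rw [h1, ← eassoc hS, epow3 hS, hS.hArityB, eassoc hS]
  rfl

theorem ebul_comp (hS : S.IsExt) (u v : α) :
    S.bul (S.comp u v) =
      S.comp (S.bul v) (S.comp (S.bul u) (S.comp (S.bul S.B) (S.pow S.B 2))) := by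
  show S.bul (S.ap (S.ap S.B u) v) = _
  rw [hS.hBulApp, hS.hBulApp, epow2 hS]
  simp only [eassoc hS]

theorem eEBc (hS : S.IsExt) (x y r : α) :
    S.comp (S.ap S.B x) (S.comp (S.ap S.B y) r) = S.comp (S.ap S.B (S.comp x y)) r := by
  rw [← eassoc hS, eEB hS]

theorem ekey (hS : S.IsExt) : ∀ (m : ℕ) (w : α),
    S.comp (S.bul (S.pow S.B m))
      (S.comp S.B (S.comp (S.ap S.B w) (S.pow S.B (m + 1)))) =
    S.comp (S.ap S.B w) (S.comp (S.ap S.B (S.pow S.B m)) S.B) := by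
  intro m
  induction m with
  | zero =>
      intro w
      show S.comp (S.bul S.I) (S.comp S.B (S.comp (S.ap S.B w) (S.pow S.B 1))) =
        S.comp (S.ap S.B w) (S.comp (S.ap S.B S.I) S.B)
      rw [epow1 hS, ← eassoc hS, ebulI hS, eunit_left hS, hS.hLam, eunit_left hS]
  | succ m ih =>
      intro w
      have hR : S.comp (S.ap S.B w) (S.comp (S.ap S.B (S.pow S.B (m + 1))) S.B)
          = S.comp (S.ap S.B (S.comp w S.B)) (S.comp (S.ap S.B (S.pow S.B m)) S.B) := by
        rw [show S.pow S.B (m + 1) = S.comp S.B (S.pow S.B m) from rfl]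
        rw [← eEB hS, eassoc hS, ← eassoc hS, eEB hS]
      have e1 : S.bul (S.pow S.B (m + 1)) =
          S.comp (S.bul (S.pow S.B m))
            (S.comp (S.bul S.B) (S.comp (S.bul S.B) (S.pow S.B 2))) := by
        show S.bul (S.comp S.B (S.pow S.B m)) = _
        exact ebul_comp hS S.B (S.pow S.B m)
      have p23 : ∀ r : α, S.comp (S.pow S.B 2) (S.comp S.B r) = S.comp (S.pow S.B 3) r :=
        fun r => epowB_chain hS 2 r
      have r6c : ∀ r : α, S.comp (S.bul S.B) (S.comp (S.pow S.B 3) r)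
          = S.comp (S.ap S.B S.B) (S.comp (S.pow S.B 1) r) :=
        fun r => echain hS (ebulB_pow hS 0) r
      rw [e1]
      simp only [eassoc hS]
      rw [show m + 1 + 1 = m + 2 from rfl]
      rw [p23, r6c, epow1 hS]
      rw [echain hS (eR4 hS S.B S.B)]
      rw [echain hS (eR11 hS w)]
      rw [echain hS (eR4 hS S.B (S.ap S.B w))]
      rw [show S.comp S.B (S.pow S.B (m + 2)) = S.pow S.B (m + 3) from rfl]
      rw [ebulB_pow hS m]
      rw [eEBc hS w S.B]
      rw [ih (S.comp w S.B)]
      rw [hR]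

end BIStruct
end Paper

/-- The object `1` of the internal PRO is reflexive with application `B`:
for `a : (m+1) → 1`, the element `(a I)• ∘ Bᵐ` is the unique element of arity
`m → 1` whose composite with `B` is `a`. -/
theorem stmt_7 {α : Type*} (S : Paper.BIStruct α) (hS : S.IsExt)
    {a : α} {m : ℕ} (h : S.hasArity a (m + 1) 1) :
    S.hasArity (S.comp (S.bul (S.ap a S.I)) (S.pow S.B m)) m 1 ∧
    S.comp (S.comp (S.bul (S.ap a S.I)) (S.pow S.B m)) S.B = a ∧
    ∀ c : α, S.hasArity c m 1 → S.comp c S.B = a →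
      c = S.comp (S.bul (S.ap a S.I)) (S.pow S.B m) := by
  open Paper.BIStruct in
  have h' : S.comp (S.bul a) (S.pow S.B (m + 2)) = S.comp (S.ap S.B a) (S.pow S.B 1) := h
  refine ⟨?_, ?_, ?_⟩
  · -- arity of (a I)• ∘ B^m
    show S.comp (S.bul (S.comp (S.bul (S.ap a S.I)) (S.pow S.B m))) (S.pow S.B (m + 1)) =
      S.comp (S.ap S.B (S.comp (S.bul (S.ap a S.I)) (S.pow S.B m))) (S.pow S.B 1)
    rw [Paper.BIStruct.ebul_comp hS]
    simp only [Paper.BIStruct.eassoc hS]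
    rw [← Paper.BIStruct.epow_add hS 2 (m + 1)]
    rw [show 2 + (m + 1) = m + 3 by omega]
    rw [Paper.BIStruct.ebulB_pow hS m]
    rw [Paper.BIStruct.echain hS (Paper.BIStruct.eR4 hS (S.bul (S.ap a S.I)) S.B)]
    rw [show S.pow S.B (m + 1) = S.comp S.B (S.pow S.B m) from rfl]
    rw [Paper.BIStruct.echain hS (hS.hArityBul (S.ap a S.I))]
    rw [show S.comp S.B (S.pow S.B m) = S.pow S.B (m + 1) from rfl]
    rw [Paper.BIStruct.ekey hS m (S.bul (S.ap a S.I))]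
    rw [Paper.BIStruct.epow1 hS, ← Paper.BIStruct.eEB hS, Paper.BIStruct.eassoc hS]
  · -- composite with B is a
    rw [Paper.BIStruct.eassoc hS, ← Paper.BIStruct.epow_succ hS]
    rw [hS.hBulApp]
    rw [Paper.BIStruct.eassoc hS, Paper.BIStruct.eassoc hS]
    rw [show S.comp S.B (S.pow S.B (m + 1)) = S.pow S.B (m + 2) from rfl]
    rw [h', Paper.BIStruct.epow1 hS]
    rw [Paper.BIStruct.echain hS (Paper.BIStruct.eR4 hS S.I a)]
    rw [Paper.BIStruct.ebulI hS]
    exact Paper.BIStruct.eunit_right hS a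
  · -- uniqueness
    intro c hc1 hc2
    have hc1' : S.comp (S.bul c) (S.pow S.B (m + 1)) = S.comp (S.ap S.B c) (S.pow S.B 1) := hc1
    have haI : S.ap a S.I = S.ap c S.I := by
      rw [← hc2, Paper.BIStruct.eap_comp hS, hS.hLam]
    rw [haI, hS.hBulApp]
    rw [Paper.BIStruct.eassoc hS, Paper.BIStruct.eassoc hS]
    rw [show S.comp S.B (S.pow S.B m) = S.pow S.B (m + 1) from rfl]
    rw [hc1', Paper.BIStruct.epow1 hS]
    rw [Paper.BIStruct.echain hS (Paper.BIStruct.eR4 hS S.I c)]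
    rw [Paper.BIStruct.ebulI hS]
    exact (Paper.BIStruct.eunit_right hS c).symm
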